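/- Assume n = 1 + ∑_{i=1}^m r_i. The following are equivalent: (i) the Stieltjes–Bethe equations ∑_{i=1}^m r_i/(x_k−y_i) − ∑_{j=1, j≠k}^n 1/(x_k−x_j) = 0 hold for every k = 1,…,n−1; (ii) there exist polynomials p, q ∈ ℂ[z] with q ≠ 0 such that for every z ∈ ℂ with q(z) ≠ 0 and z ∉ {x₁,…,xₙ} ∪ {y₁,…,y_m}, the derivative of the rational function p/q at z equals 1/φ(z)². In other words, the Abelian integral F(z) = ∫ dz/φ(z)² is a (single-valued) rational function precisely when the Stieltjes–Bethe equations hold. -/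

import Mathlib

/-!
Write `φ = A / B` with `A = ∏ (X - xⱼ)` and `B = ∏ (X - yᵢ) ^ rᵢ`. Since `1 / φ² = B² / A²` and
`(p / q)' = W(q, p) / q²` for the Wronskian `W(q, p) = q p' - q' p`, a rational primitive of
`1 / φ²` is a polynomial identity `W(q, p) A² = B² q²`. At a zero `c = xₖ` write `A = (X - c) Aₖ`:
the residue of `B² / A²` at `c` is a nonzero multiple of `W(Aₖ, B)(c)`, which in turn is the
Stieltjes–Bethe expression times `Aₖ(c) B(c)`.

If the residues at all zeros but the last vanish, take `p / A = -∑ₖ bₖ / (X - xₖ)` with `bₖ` the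
coefficient of the double pole of `B² / A²` at `xₖ`. Then `W(A, p) - B²` has degree `≤ 2n - 2`,
vanishes at every `xₖ` and doubly at all but one of them, so it is zero.

Conversely, `P / Q = p / q + b / (X - c)` removes the double pole at `c`, and
`W(Q, P) Aₖ² = q² (B² - b Aₖ²)`. A derivative of a rational function never has a simple pole:
`mult_c W(Q, P) + 1 ≠ 2 mult_c Q`, whether or not `P` and `Q` have the same order at `c`. Hence
`B² - b Aₖ²` vanishes doubly at `c`, which is the vanishing of the residue.
-/

open Finset

namespace Polynomial

variable {K : Type*} [Field K]

theorem eval_derivative_prod_X_sub_C_pow {ι : Type*} (s : Finset ι) (a : ι → K) (r : ι → ℕ)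
    {c : K} (hc : ∀ i ∈ s, c ≠ a i) :
    (∏ i ∈ s, (X - C (a i)) ^ r i).derivative.eval c
      = (∏ i ∈ s, (X - C (a i)) ^ r i).eval c * ∑ i ∈ s, (r i : K) / (c - a i) := by
  classical
  induction s using Finset.induction_on with
  | empty => simp
  | insert i s hi ih =>
    have hci : c - a i ≠ 0 := sub_ne_zero.mpr (hc i (mem_insert_self i s))
    rw [prod_insert hi, sum_insert hi, derivative_mul, derivative_X_sub_C_pow, eval_add,
      eval_mul, eval_mul, eval_mul, ih fun j hj => hc j (mem_insert_of_mem hj)]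
    simp only [eval_prod, eval_mul, eval_pow, eval_sub, eval_X, eval_C]
    obtain _ | k := r i
    · simp
    · rw [Nat.add_sub_cancel]
      field_simp
      ring

theorem sum_rootMultiplicity_le_natDegree {ι : Type*} [Fintype ι] {x : ι → K}
    (hx : Function.Injective x) {E : K[X]} (hE : E ≠ 0) :
    ∑ i, E.rootMultiplicity (x i) ≤ E.natDegree := by
  have hdvd : ∏ i, (X - C (x i)) ^ E.rootMultiplicity (x i) ∣ E :=
    Finset.prod_dvd_of_coprime (fun i _ j _ hij => ((pairwise_coprime_X_sub_C hx) hij).pow)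
      fun i _ => pow_rootMultiplicity_dvd E (x i)
  simpa [natDegree_prod_of_monic _ _ fun i _ => (monic_X_sub_C (x i)).pow _]
    using natDegree_le_of_dvd hdvd hE

theorem eq_zero_of_natDegree_le_of_isRoot_of_isRoot_derivative {N : ℕ} {x : Fin (N + 1) → K}
    (hx : Function.Injective x) {E : K[X]} (hdeg : E.natDegree ≤ 2 * N)
    (h0 : ∀ k, E.IsRoot (x k)) (h1 : ∀ k, k ≠ Fin.last N → E.derivative.IsRoot (x k)) :
    E = 0 := by
  by_contra hE
  have hsum := sum_rootMultiplicity_le_natDegree hx hE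
  rw [Fin.sum_univ_castSucc] at hsum
  have hlast := (rootMultiplicity_pos hE).mpr (h0 (Fin.last N))
  have hdouble : ∑ _k : Fin N, 2 ≤ ∑ k : Fin N, E.rootMultiplicity (x k.castSucc) :=
    sum_le_sum fun k _ => (one_lt_rootMultiplicity_iff_isRoot hE).mpr
      ⟨h0 _, h1 _ (Fin.castSucc_ne_last k)⟩
  simp only [sum_const, card_univ, Fintype.card_fin, smul_eq_mul] at hdouble
  omega

theorem eval_wronskian_X_sub_C_mul (c : K) (A p : K[X]) :
    (wronskian ((X - C c) * A) p).eval c = -(A.eval c * p.eval c) := by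
  simp [wronskian, derivative_mul]

theorem eval_derivative_wronskian_X_sub_C_mul (c : K) (A p : K[X]) :
    (wronskian ((X - C c) * A) p).derivative.eval c = -(2 * A.derivative.eval c * p.eval c) := by
  simp only [wronskian, derivative_mul, derivative_sub, derivative_add, derivative_X,
    derivative_C, derivative_one, derivative_zero, eval_sub, eval_add, eval_mul, eval_X, eval_C,
    eval_one, eval_zero]
  ring

theorem X_sub_C_mul_derivative_X_sub_C_pow_mul (c : K) (k : ℕ) (f : K[X]) :
    (X - C c) * ((X - C c) ^ k * f).derivative
      = (X - C c) ^ k * (C (k : K) * f + (X - C c) * f.derivative) := by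
  rw [derivative_mul, derivative_X_sub_C_pow]
  obtain _ | k := k
  · simp
  · simp only [Nat.add_sub_cancel]
    ring

theorem X_sub_C_mul_wronskian_X_sub_C_pow_mul (c : K) (a b : ℕ) (f g : K[X]) :
    (X - C c) * wronskian ((X - C c) ^ b * g) ((X - C c) ^ a * f)
      = (X - C c) ^ (a + b) * (C ((a : K) - b) * (f * g) + (X - C c) * wronskian g f) := by
  have key := congrArg₂ (· - ·)
    (congrArg ((X - C c) ^ b * g * ·) (X_sub_C_mul_derivative_X_sub_C_pow_mul c a f))
    (congrArg (· * ((X - C c) ^ a * f)) (X_sub_C_mul_derivative_X_sub_C_pow_mul c b g))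
  simp only [wronskian, C_sub] at key ⊢
  linear_combination key

theorem rootMultiplicity_wronskian_add_one_ne [CharZero K] (c : K) (P Q : K[X]) :
    (wronskian Q P).rootMultiplicity c + 1 ≠ 2 * Q.rootMultiplicity c := by
  by_cases hW : wronskian Q P = 0
  · rw [hW, rootMultiplicity_zero]
    omega
  have hP : P ≠ 0 := by rintro rfl; exact hW (wronskian_zero_right Q)
  have hQ : Q ≠ 0 := by rintro rfl; exact hW (wronskian_zero_left P)
  obtain ⟨f, hPf, hf⟩ := exists_eq_pow_rootMultiplicity_mul_and_not_dvd P hP c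
  obtain ⟨g, hQg, hg⟩ := exists_eq_pow_rootMultiplicity_mul_and_not_dvd Q hQ c
  set a := P.rootMultiplicity c
  set b := Q.rootMultiplicity c
  have key := X_sub_C_mul_wronskian_X_sub_C_pow_mul c a b f g
  rw [← hPf, ← hQg] at key
  have hXW : (X - C c) * wronskian Q P ≠ 0 := mul_ne_zero (X_sub_C_ne_zero c) hW
  have hmul : ((X - C c) * wronskian Q P).rootMultiplicity c
      = 1 + (wronskian Q P).rootMultiplicity c := by
    rw [rootMultiplicity_mul hXW, rootMultiplicity_X_sub_C_self]
  rcases eq_or_ne a b with hab | hab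
  · have : a + b + 1 ≤ ((X - C c) * wronskian Q P).rootMultiplicity c := by
      rw [le_rootMultiplicity_iff hXW, key, hab, sub_self, C_0, zero_mul, zero_add, pow_succ]
      exact mul_dvd_mul_left _ (dvd_mul_right _ _)
    omega
  · set R := C ((a : K) - b) * (f * g) + (X - C c) * wronskian g f
    have hR : ¬R.IsRoot c := by
      rw [dvd_iff_isRoot, IsRoot.def] at hf hg
      simpa [R, sub_eq_zero, hf, hg] using hab
    rw [key, rootMultiplicity_mul (key ▸ hXW), rootMultiplicity_X_sub_C_pow,
      rootMultiplicity_eq_zero hR] at hmul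
    omega

theorem eval_wronskian_eq_zero_of_wronskian_mul_sq_eq [CharZero K] {p q A B : K[X]} {c : K}
    (hq : q ≠ 0) (hA : A.eval c ≠ 0) (hB : B.eval c ≠ 0)
    (h : wronskian q p * ((X - C c) * A) ^ 2 = B ^ 2 * q ^ 2) :
    (wronskian A B).eval c = 0 := by
  set b := (B.eval c / A.eval c) ^ 2
  set H := B ^ 2 - C b * A ^ 2
  have hHc : H.IsRoot c := by
    simp only [H, b, IsRoot.def, eval_sub, eval_mul, eval_pow, eval_C]
    field_simp
    ring
  -- `P / Q = p / q + b / (X - c)` has no double pole at `c`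
  have hW : wronskian (q * (X - C c)) (p * (X - C c) + C b * q)
      = (X - C c) ^ 2 * wronskian q p - C b * q ^ 2 := by
    simp only [wronskian, derivative_mul, derivative_add, derivative_X_sub_C, derivative_C]
    ring
  have hWH : wronskian (q * (X - C c)) (p * (X - C c) + C b * q) * A ^ 2 = q ^ 2 * H := by
    rw [hW]
    linear_combination h
  have hH' : H.derivative.IsRoot c := by
    by_cases hH : H = 0
    · simp [hH]
    have hW0 : wronskian (q * (X - C c)) (p * (X - C c) + C b * q) * A ^ 2 ≠ 0 := by
      rw [hWH]
      exact mul_ne_zero (pow_ne_zero 2 hq) hH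
    have hmult := congrArg (rootMultiplicity c) hWH
    rw [rootMultiplicity_mul hW0, rootMultiplicity_mul (hWH ▸ hW0),
      rootMultiplicity_eq_zero (by simpa using hA : ¬(A ^ 2).IsRoot c), pow_two,
      rootMultiplicity_mul (by simpa using hq)] at hmult
    have hne := rootMultiplicity_wronskian_add_one_ne c (p * (X - C c) + C b * q) (q * (X - C c))
    rw [rootMultiplicity_mul (mul_ne_zero hq (X_sub_C_ne_zero c)),
      rootMultiplicity_X_sub_C_self] at hne
    have hpos := (rootMultiplicity_pos hH).mpr hHc
    exact ((one_lt_rootMultiplicity_iff_isRoot hH).mp (by omega)).2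
  have hH'eval : H.derivative.eval c = 2 * B.eval c / A.eval c * (wronskian A B).eval c := by
    simp only [H, b, wronskian, derivative_sub, derivative_mul, derivative_C, derivative_pow,
      eval_sub, eval_mul, eval_pow, eval_C, zero_mul, zero_add]
    field_simp
    ring
  rw [IsRoot.def, hH'eval] at hH'
  simpa [hA, hB] using hH'

end Polynomial

namespace StieltjesBethe

open Polynomial

variable {K : Type*} [Field K] {n m : ℕ}

noncomputable def zeroPoly (x : Fin n → K) : K[X] := ∏ j, (X - C (x j))

noncomputable def zeroPolyErase (x : Fin n → K) (k : Fin n) : K[X] :=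
  ∏ j ∈ univ.erase k, (X - C (x j))

noncomputable def polePoly (y : Fin m → K) (r : Fin m → ℕ) : K[X] := ∏ i, (X - C (y i)) ^ r i

/-- The coefficient of `(X - x k)⁻²` in the partial fraction expansion of `B² / (zeroPoly x)²`. -/
noncomputable def doublePoleCoeff (x : Fin n → K) (B : K[X]) (k : Fin n) : K :=
  (B.eval (x k) / (zeroPolyErase x k).eval (x k)) ^ 2

/-- The numerator of `-∑ₖ bₖ / (X - x k)` over the denominator `zeroPoly x`, where
`bₖ = doublePoleCoeff x B k`. -/
noncomputable def primitiveNum (x : Fin n → K) (B : K[X]) : K[X] :=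
  -∑ k, C (doublePoleCoeff x B k) * zeroPolyErase x k

theorem zeroPoly_ne_zero (x : Fin n → K) : zeroPoly x ≠ 0 :=
  prod_ne_zero_iff.mpr fun j _ => X_sub_C_ne_zero (x j)

theorem natDegree_zeroPoly (x : Fin n → K) : (zeroPoly x).natDegree = n := by
  simp [zeroPoly, natDegree_prod_of_monic _ _ fun j _ => monic_X_sub_C (x j)]

theorem eval_zeroPoly (x : Fin n → K) (z : K) : (zeroPoly x).eval z = ∏ j, (z - x j) := by
  simp [zeroPoly, eval_prod]

theorem eval_zeroPoly_ne_zero {x : Fin n → K} {z : K} (hz : ∀ j, z ≠ x j) :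
    (zeroPoly x).eval z ≠ 0 := by
  rw [eval_zeroPoly]
  exact prod_ne_zero_iff.mpr fun j _ => sub_ne_zero.mpr (hz j)

theorem zeroPoly_eq_X_sub_C_mul (x : Fin n → K) (k : Fin n) :
    zeroPoly x = (X - C (x k)) * zeroPolyErase x k :=
  (mul_prod_erase _ _ (mem_univ k)).symm

theorem eval_zeroPolyErase (x : Fin n → K) (k : Fin n) (z : K) :
    (zeroPolyErase x k).eval z = ∏ j ∈ univ.erase k, (z - x j) := by
  simp [zeroPolyErase, eval_prod]

theorem eval_zeroPolyErase_self_ne_zero {x : Fin n → K} (hx : Function.Injective x) (k : Fin n) :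
    (zeroPolyErase x k).eval (x k) ≠ 0 := by
  rw [eval_zeroPolyErase]
  exact prod_ne_zero_iff.mpr fun j hj => sub_ne_zero.mpr (hx.ne (ne_of_mem_erase hj).symm)

theorem eval_zeroPolyErase_of_ne (x : Fin n → K) {j k : Fin n} (h : j ≠ k) :
    (zeroPolyErase x j).eval (x k) = 0 := by
  rw [eval_zeroPolyErase]
  exact prod_eq_zero (mem_erase.mpr ⟨h.symm, mem_univ k⟩) (sub_self _)

theorem natDegree_zeroPolyErase (x : Fin n → K) (k : Fin n) :
    (zeroPolyErase x k).natDegree = n - 1 := by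
  simp [zeroPolyErase, natDegree_prod_of_monic _ _ fun j _ => monic_X_sub_C (x j)]

theorem eval_polePoly (y : Fin m → K) (r : Fin m → ℕ) (z : K) :
    (polePoly y r).eval z = ∏ i, (z - y i) ^ r i := by
  simp [polePoly, eval_prod]

theorem eval_polePoly_ne_zero {x : Fin n → K} {y : Fin m → K} (hxy : ∀ j i, x j ≠ y i)
    (r : Fin m → ℕ) (k : Fin n) : (polePoly y r).eval (x k) ≠ 0 := by
  simp only [polePoly, eval_prod, eval_pow, eval_sub, eval_X, eval_C]
  exact prod_ne_zero_iff.mpr fun i _ => pow_ne_zero _ (sub_ne_zero.mpr (hxy k i))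

theorem natDegree_polePoly (y : Fin m → K) (r : Fin m → ℕ) :
    (polePoly y r).natDegree = ∑ i, r i := by
  simp [polePoly, natDegree_prod_of_monic _ _ fun i _ => (monic_X_sub_C (y i)).pow (r i)]

theorem eval_primitiveNum {x : Fin n → K} (B : K[X]) (k : Fin n) :
    (primitiveNum x B).eval (x k)
      = -(doublePoleCoeff x B k * (zeroPolyErase x k).eval (x k)) := by
  rw [primitiveNum, eval_neg, eval_finsetSum, sum_eq_single k]
  · simp
  · intro j _ hjk
    simp [eval_zeroPolyErase_of_ne x hjk]
  · simp

theorem natDegree_primitiveNum_le (x : Fin n → K) (B : K[X]) :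
    (primitiveNum x B).natDegree ≤ n - 1 := by
  rw [primitiveNum, natDegree_neg]
  refine natDegree_sum_le_of_forall_le _ _ fun k _ => ?_
  exact (natDegree_C_mul_le _ _).trans (natDegree_zeroPolyErase x k).le

theorem wronskian_zeroPoly_primitiveNum {N : ℕ} {x : Fin (N + 1) → K}
    (hx : Function.Injective x) {B : K[X]} (hB : B.natDegree ≤ N)
    (h : ∀ k, k ≠ Fin.last N → (wronskian (zeroPolyErase x k) B).eval (x k) = 0) :
    wronskian (zeroPoly x) (primitiveNum x B) = B ^ 2 := by
  rw [← sub_eq_zero]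
  refine eq_zero_of_natDegree_le_of_isRoot_of_isRoot_derivative hx ?_ (fun k => ?_) fun k hk => ?_
  · refine (natDegree_sub_le _ _).trans (max_le ?_ ?_)
    · by_cases hW : wronskian (zeroPoly x) (primitiveNum x B) = 0
      · simp [hW]
      have hlt := natDegree_wronskian_lt_add hW
      have hp := natDegree_primitiveNum_le x B
      rw [natDegree_zeroPoly] at hlt
      omega
    · exact natDegree_pow_le.trans (by omega)
  · have hA := eval_zeroPolyErase_self_ne_zero hx k
    rw [IsRoot.def, eval_sub, zeroPoly_eq_X_sub_C_mul x k, eval_wronskian_X_sub_C_mul,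
      eval_primitiveNum, doublePoleCoeff, eval_pow]
    field_simp
    ring
  · have hA := eval_zeroPolyErase_self_ne_zero hx k
    have hW := h k hk
    rw [wronskian, eval_sub, eval_mul, eval_mul] at hW
    rw [IsRoot.def, derivative_sub, eval_sub, zeroPoly_eq_X_sub_C_mul x k,
      eval_derivative_wronskian_X_sub_C_mul, eval_primitiveNum, doublePoleCoeff, derivative_sq,
      eval_mul, eval_mul, eval_C]
    field_simp
    linear_combination (-2 * B.eval (x k)) * hW

theorem eval_wronskian_zeroPolyErase_polePoly {x : Fin n → K} {y : Fin m → K}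
    (hx : Function.Injective x) (hxy : ∀ j i, x j ≠ y i) (r : Fin m → ℕ) (k : Fin n) :
    (wronskian (zeroPolyErase x k) (polePoly y r)).eval (x k)
      = (zeroPolyErase x k).eval (x k) * (polePoly y r).eval (x k)
        * (∑ i, (r i : K) / (x k - y i) - ∑ j ∈ univ.erase k, 1 / (x k - x j)) := by
  have hB := eval_derivative_prod_X_sub_C_pow univ y r fun i _ => hxy k i
  have hA := eval_derivative_prod_X_sub_C_pow (univ.erase k) x (fun _ => 1)
    fun j hj => hx.ne (ne_of_mem_erase hj).symm
  simp only [pow_one, Nat.cast_one] at hA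
  rw [wronskian, eval_sub, eval_mul, eval_mul, zeroPolyErase, polePoly, hA, hB]
  ring

theorem stieltjesBethe_iff {x : Fin n → K} {y : Fin m → K} (hx : Function.Injective x)
    (hxy : ∀ j i, x j ≠ y i) (r : Fin m → ℕ) (k : Fin n) :
    ∑ i, (r i : K) / (x k - y i) - ∑ j ∈ univ.erase k, 1 / (x k - x j) = 0
      ↔ (wronskian (zeroPolyErase x k) (polePoly y r)).eval (x k) = 0 := by
  rw [eval_wronskian_zeroPolyErase_polePoly hx hxy, mul_eq_zero, or_iff_right
    (mul_ne_zero (eval_zeroPolyErase_self_ne_zero hx k) (eval_polePoly_ne_zero hxy r k))]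

theorem deriv_eval_div_eval (p q : ℂ[X]) {z : ℂ} (hz : q.eval z ≠ 0) :
    deriv (fun w => p.eval w / q.eval w) z = (wronskian q p).eval z / q.eval z ^ 2 := by
  refine ((p.hasDerivAt z).div (q.hasDerivAt z) hz).deriv.trans ?_
  rw [wronskian, eval_sub, eval_mul, eval_mul]
  ring

theorem forall_deriv_eq_iff {x : Fin n → ℂ} {y : Fin m → ℂ} {r : Fin m → ℕ} {p q : ℂ[X]}
    (hq : q ≠ 0) :
    (∀ z : ℂ, q.eval z ≠ 0 → (∀ j, z ≠ x j) → (∀ i, z ≠ y i) →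
      deriv (fun w => p.eval w / q.eval w) z = ((polePoly y r).eval z / (zeroPoly x).eval z) ^ 2)
      ↔ wronskian q p * zeroPoly x ^ 2 = polePoly y r ^ 2 * q ^ 2 := by
  have key : ∀ z, q.eval z ≠ 0 → (∀ j, z ≠ x j) →
      (deriv (fun w => p.eval w / q.eval w) z = ((polePoly y r).eval z / (zeroPoly x).eval z) ^ 2
        ↔ (wronskian q p * zeroPoly x ^ 2).eval z = (polePoly y r ^ 2 * q ^ 2).eval z) :=
    fun z hqz hzx => by
      rw [deriv_eval_div_eval p q hqz, div_pow, div_eq_div_iff (pow_ne_zero 2 hqz)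
        (pow_ne_zero 2 (eval_zeroPoly_ne_zero hzx))]
      simp only [eval_mul, eval_pow]
  refine ⟨fun h => eq_of_infinite_eval_eq _ _ ?_,
    fun h z hqz hzx _ => (key z hqz hzx).mpr (by rw [h])⟩
  refine ((q.roots.toFinset.finite_toSet.union
    ((Set.finite_range x).union (Set.finite_range y))).infinite_compl).mono fun z hz => ?_
  simp only [Set.mem_compl_iff, Set.mem_union, Finset.mem_coe, Multiset.mem_toFinset,
    mem_roots hq, IsRoot.def, Set.mem_range, not_or, not_exists] at hz
  obtain ⟨hqz, hzx, hzy⟩ := hz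
  have hzx' : ∀ j, z ≠ x j := fun j h => hzx j h.symm
  exact (key z hqz hzx').mp (h z hqz hzx' fun i h => hzy i h.symm)

end StieltjesBethe

open Polynomial StieltjesBethe in
theorem stmt_13_general (n m : ℕ)
    (x : Fin n → ℂ) (y : Fin m → ℂ) (r : Fin m → ℕ)
    (hx : Function.Injective x)
    (hxy : ∀ j i, x j ≠ y i)
    (hnr : n = 1 + ∑ i, r i)
    (φ : ℂ → ℂ)
    (hφ : φ = fun z => (∏ j, (z - x j)) / ∏ i, (z - y i) ^ r i) :
    (∀ k : Fin n, (k : ℕ) + 1 < n →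
      ∑ i, (r i : ℂ) / (x k - y i)
        - ∑ j ∈ Finset.univ.erase k, 1 / (x k - x j) = 0) ↔
    (∃ p q : Polynomial ℂ, q ≠ 0 ∧
      ∀ z : ℂ, q.eval z ≠ 0 → (∀ j, z ≠ x j) → (∀ i, z ≠ y i) →
        deriv (fun w => p.eval w / q.eval w) z = 1 / (φ z) ^ 2) := by
  obtain ⟨N, rfl⟩ : ∃ N, n = N + 1 := ⟨∑ i, r i, by omega⟩
  have hφ' : ∀ z, 1 / φ z ^ 2 = ((polePoly y r).eval z / (zeroPoly x).eval z) ^ 2 := fun z => by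
    rw [hφ, eval_zeroPoly, eval_polePoly, one_div, ← inv_pow, inv_div]
  simp only [hφ', stieltjesBethe_iff hx hxy]
  constructor
  · intro hSB
    refine ⟨primitiveNum x (polePoly y r), zeroPoly x, zeroPoly_ne_zero x,
      (forall_deriv_eq_iff (zeroPoly_ne_zero x)).mpr ?_⟩
    rw [wronskian_zeroPoly_primitiveNum hx ((natDegree_polePoly y r).trans (by omega)).le
      fun k hk => hSB k (by have := Fin.val_lt_last hk; omega)]
  · rintro ⟨p, q, hq, hpq⟩ k -
    refine eval_wronskian_eq_zero_of_wronskian_mul_sq_eq (p := p) hq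
      (eval_zeroPolyErase_self_ne_zero hx k) (eval_polePoly_ne_zero hxy r k) ?_
    rw [← zeroPoly_eq_X_sub_C_mul]
    exact (forall_deriv_eq_iff hq).mp hpq

/-- The Stieltjes–Bethe equations at `k = 1,…,n-1` hold iff the Abelian integral
`F = ∫ dz/φ(z)²` is a rational function, i.e. there are polynomials `p, q` with
`(p/q)' = 1/φ²` away from the poles. -/
theorem stmt_13 (n m : ℕ) (hn : 0 < n) (hm : 0 < m)
    (x : Fin n → ℂ) (y : Fin m → ℂ) (r : Fin m → ℕ) (hr : ∀ i, 0 < r i)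
    (hx : Function.Injective x) (hy : Function.Injective y)
    (hxy : ∀ j i, x j ≠ y i)
    (hnr : n = 1 + ∑ i, r i)
    (φ : ℂ → ℂ)
    (hφ : φ = fun z => (∏ j, (z - x j)) / ∏ i, (z - y i) ^ r i) :
    (∀ k : Fin n, (k : ℕ) + 1 < n →
      ∑ i, (r i : ℂ) / (x k - y i)
        - ∑ j ∈ Finset.univ.erase k, 1 / (x k - x j) = 0) ↔
    (∃ p q : Polynomial ℂ, q ≠ 0 ∧
      ∀ z : ℂ, q.eval z ≠ 0 → (∀ j, z ≠ x j) → (∀ i, z ≠ y i) →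
        deriv (fun w => p.eval w / q.eval w) z = 1 / (φ z) ^ 2) :=
  stmt_13_general n m x y r hx hxy hnr φ hφ
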